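/- For λ > 0, the scalar curvature R(q) = −λ(N−1)(2N + 3(N−2)λq²)/(1+λq²)³ of the Darboux III metric is negative for all q ∈ ℝ^N (N ≥ 2), tends to 0 as |q| → ∞, and attains its minimum value −2λN(N−1) at q = 0. -/
import Mathlib

open Filter Topology

noncomputable def Rcurv {N : ℕ} (lam : ℝ) (q : Fin N → ℝ) : ℝ :=
  -lam * ((N : ℝ) - 1) * (2 * N + 3 * ((N : ℝ) - 2) * lam * ∑ i, q i ^ 2)
    / (1 + lam * ∑ i, q i ^ 2) ^ 3

theorem stmt_9 {N : ℕ} (hN : 2 ≤ N) (lam : ℝ) (hlam : 0 < lam) :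
    (∀ q : Fin N → ℝ, Rcurv lam q < 0) ∧
    Tendsto (Rcurv lam (N := N)) (Filter.comap (fun q : Fin N → ℝ => ‖q‖) atTop) (𝓝 0) ∧
    Rcurv lam (0 : Fin N → ℝ) = -2 * lam * N * ((N : ℝ) - 1) ∧
    (∀ q : Fin N → ℝ, Rcurv lam (0 : Fin N → ℝ) ≤ Rcurv lam q) := by
  have hN2 : (2 : ℝ) ≤ (N : ℝ) := by exact_mod_cast hN
  have hs : ∀ q : Fin N → ℝ, 0 ≤ ∑ i, q i ^ 2 := fun q =>
    Finset.sum_nonneg fun i _ => sq_nonneg _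
  have hden : ∀ q : Fin N → ℝ, 0 < 1 + lam * ∑ i, q i ^ 2 := fun q => by
    nlinarith [hs q]
  have hzero : Rcurv lam (0 : Fin N → ℝ) = -2 * lam * N * ((N : ℝ) - 1) := by
    simp [Rcurv]
    ring
  refine ⟨?_, ?_, hzero, ?_⟩
  · intro q
    have hA : 0 < lam * ((N : ℝ) - 1) := by nlinarith
    have hB : 0 < 2 * (N : ℝ) + 3 * ((N : ℝ) - 2) * lam * ∑ i, q i ^ 2 := by
      nlinarith [mul_nonneg (by linarith : (0:ℝ) ≤ (N:ℝ) - 2) (mul_nonneg hlam.le (hs q))]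
    have h1 : -lam * ((N : ℝ) - 1) * (2 * N + 3 * ((N : ℝ) - 2) * lam * ∑ i, q i ^ 2) < 0 := by
      nlinarith [mul_pos hA hB]
    exact div_neg_of_neg_of_pos h1 (pow_pos (hden q) 3)
  · -- tendsto
    have hu : Tendsto (fun q : Fin N → ℝ => 1 + lam * ∑ i, q i ^ 2)
        (Filter.comap (fun q : Fin N → ℝ => ‖q‖) atTop) atTop := by
      have h1 : Tendsto (fun q : Fin N → ℝ => ‖q‖)
          (Filter.comap (fun q : Fin N → ℝ => ‖q‖) atTop) atTop := tendsto_comap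
      have h2 : Tendsto (fun q : Fin N → ℝ => ‖q‖ ^ 2)
          (Filter.comap (fun q : Fin N → ℝ => ‖q‖) atTop) atTop :=
        (tendsto_pow_atTop (by norm_num)).comp h1
      have h3 : Tendsto (fun q : Fin N → ℝ => ∑ i, q i ^ 2)
          (Filter.comap (fun q : Fin N → ℝ => ‖q‖) atTop) atTop := by
        apply tendsto_atTop_mono _ h2
        intro q
        obtain ⟨i, -, hi⟩ := Finset.exists_mem_eq_sup (Finset.univ : Finset (Fin N))
          ⟨⟨0, by omega⟩, Finset.mem_univ _⟩ (fun i => ‖q i‖₊)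
        have hnorm : ‖q‖ = ‖q i‖ := by
          rw [Pi.norm_def, hi, coe_nnnorm]
        calc ‖q‖ ^ 2 = q i ^ 2 := by rw [hnorm, Real.norm_eq_abs, sq_abs]
          _ ≤ ∑ j, q j ^ 2 :=
            Finset.single_le_sum (fun j _ => sq_nonneg (q j)) (Finset.mem_univ i)
      have := h3.const_mul_atTop hlam
      exact tendsto_atTop_add_const_left _ 1 (by simpa using this)
    have hinv : Tendsto (fun q : Fin N → ℝ => (1 + lam * ∑ i, q i ^ 2)⁻¹)
        (Filter.comap (fun q : Fin N → ℝ => ‖q‖) atTop) (𝓝 0) :=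
      hu.inv_tendsto_atTop
    have key : ∀ q : Fin N → ℝ, Rcurv lam q =
        (-lam * ((N : ℝ) - 1) * (6 - N)) * ((1 + lam * ∑ i, q i ^ 2)⁻¹) ^ 3 +
        (-lam * ((N : ℝ) - 1) * (3 * ((N : ℝ) - 2))) * ((1 + lam * ∑ i, q i ^ 2)⁻¹) ^ 2 := by
      intro q
      have hd := (hden q).ne'
      unfold Rcurv
      field_simp
      ring
    have : Tendsto (fun q : Fin N → ℝ =>
        (-lam * ((N : ℝ) - 1) * (6 - N)) * ((1 + lam * ∑ i, q i ^ 2)⁻¹) ^ 3 +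
        (-lam * ((N : ℝ) - 1) * (3 * ((N : ℝ) - 2))) * ((1 + lam * ∑ i, q i ^ 2)⁻¹) ^ 2)
        (Filter.comap (fun q : Fin N → ℝ => ‖q‖) atTop) (𝓝 0) := by
      have h3 := ((hinv.pow 3).const_mul (-lam * ((N : ℝ) - 1) * (6 - N)))
      have h2 := ((hinv.pow 2).const_mul (-lam * ((N : ℝ) - 1) * (3 * ((N : ℝ) - 2))))
      simpa using h3.add h2
    exact this.congr fun q => (key q).symm
  · intro q
    rw [hzero]
    unfold Rcurv
    rw [le_div_iff₀ (pow_pos (hden q) 3)]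
    have hA : 0 < lam * ((N : ℝ) - 1) := by nlinarith
    have hu : 0 ≤ lam * ∑ i, q i ^ 2 := mul_nonneg hlam.le (hs q)
    have hN0 : (0:ℝ) ≤ (N : ℝ) := by linarith
    nlinarith [mul_nonneg (mul_nonneg hA.le hu) hN0,
      mul_nonneg (mul_nonneg hA.le (mul_nonneg hu hu)) hN0,
      mul_nonneg (mul_nonneg hA.le (mul_nonneg (mul_nonneg hu hu) hu)) hN0,
      mul_nonneg hA.le hu]
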